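/- arXiv:2405.10854 — 2 statements merged into one kernel-verified Lean document; each statement's English description precedes it below -/
import Mathlib

section
/- For integers k ≥ 1 and integers s, t with 0 ≤ s < t ≤ k-1, with c_q = (q-1)/q + q/(4k^2), the inequality c_{k+t+1}*(k+t+1) > c_{k+s+1}*(k+s) + (t-s) holds. -/
/-- For `c q = (q-1)/q + q/(4k²)` and `0 ≤ s < t ≤ k-1`:
`c (k+t+1)·(k+t+1) > c (k+s+1)·(k+s) + (t-s)`. -/
theorem stmt_4 (k s t : ℕ) (hk : 1 ≤ k) (hst : s < t) (ht : t + 1 ≤ k) (c : ℕ → ℝ)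
    (hc : ∀ q, c q = ((q : ℝ) - 1) / q + (q : ℝ) / (4 * (k : ℝ) ^ 2)) :
    c (k + t + 1) * ((k : ℝ) + t + 1) >
      c (k + s + 1) * ((k : ℝ) + s) + ((t : ℝ) - s) := by
  rw [hc, hc]
  push_cast
  have hK : (1:ℝ) ≤ (k:ℝ) := by exact_mod_cast hk
  have hS : (0:ℝ) ≤ (s:ℝ) := Nat.cast_nonneg s
  have hT : (s:ℝ) + 1 ≤ (t:ℝ) := by exact_mod_cast hst
  have h1 : (0:ℝ) < (k:ℝ) + t + 1 := by nlinarith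
  have h2 : (0:ℝ) < (k:ℝ) + s + 1 := by nlinarith
  have h3 : (0:ℝ) < 4 * (k:ℝ) ^ 2 := by nlinarith
  rw [gt_iff_lt, ← sub_pos]
  have key : (((k:ℝ) + t + 1 - 1) / ((k:ℝ) + t + 1) + ((k:ℝ) + t + 1) / (4 * (k:ℝ) ^ 2)) * ((k : ℝ) + t + 1) -
      ((((k:ℝ) + s + 1 - 1) / ((k:ℝ) + s + 1) + ((k:ℝ) + s + 1) / (4 * (k:ℝ) ^ 2)) * ((k : ℝ) + s) + ((t : ℝ) - s)) =
      (1 - 1 / ((k:ℝ) + s + 1)) + (((k:ℝ)+t+1)^2 - ((k:ℝ)+s+1)*((k:ℝ)+s)) / (4 * (k:ℝ)^2) := by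
    field_simp
    ring
  rw [key]
  have e1 : (0:ℝ) ≤ 1 - 1 / ((k:ℝ) + s + 1) := by
    rw [sub_nonneg]
    rw [div_le_one h2]; nlinarith
  have e2 : (0:ℝ) < (((k:ℝ)+t+1)^2 - ((k:ℝ)+s+1)*((k:ℝ)+s)) / (4 * (k:ℝ)^2) := by
    apply div_pos _ h3
    nlinarith
  linarith
end

section
/- If a function f : ℕ → ℝ satisfies f(q+1) + f(q-1) - 2 f(q) > 0 for all q in an interval [m+1, n-1] of integers, and a sequence (a_t) of positive reals satisfies log₂ a_t = f(m + t) * D * (1 + ε_t) for all 0 ≤ t ≤ n - m, where D > 0 and the errors satisfy |ε_t| ≤ δ with δ sufficiently small (depending on f, m, n), then a_t^2 < a_{t-1} * a_{t+1} for all 1 ≤ t ≤ n - m - 1, i.e. all interior terms are strictly log-convex. -/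
/-- Approximate exponential growth governed by a strictly convex exponent
function forces strict log-convexity of all interior terms, provided the
relative errors are small enough (quantified as in the paper:
`2δ·max|f| < (1/3)·min` of the second differences). -/
theorem stmt_14 (m n : ℕ) (hmn : m + 2 ≤ n) (f : ℕ → ℝ)
    (hconv : ∀ q, m + 1 ≤ q → q ≤ n - 1 → f (q + 1) + f (q - 1) - 2 * f q > 0)
    (D : ℝ) (hD : 0 < D) (δ : ℝ) (hδpos : 0 < δ)
    (hδ : ∀ q, m ≤ q → q ≤ n → ∀ q', m + 1 ≤ q' → q' ≤ n - 1 →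
        2 * δ * |f q| < (1 / 3) * (f (q' + 1) + f (q' - 1) - 2 * f q'))
    (a : ℕ → ℝ) (hapos : ∀ t, 0 < a t) (ε : ℕ → ℝ)
    (hε : ∀ t, |ε t| ≤ δ)
    (hlog : ∀ t, m + t ≤ n → Real.logb 2 (a t) = f (m + t) * D * (1 + ε t)) :
    ∀ t, 1 ≤ t → m + t + 1 ≤ n → (a t) ^ 2 < a (t - 1) * a (t + 1) := by
  intro t ht htn
  set q := m + t with hq
  have hq1 : m + 1 ≤ q := by omega
  have hq2 : q ≤ n - 1 := by omega
  have hΔ := hconv q hq1 hq2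
  set Δ := f (q + 1) + f (q - 1) - 2 * f q with hΔdef
  -- bounds on the three |f| values
  have hb1 := hδ (q + 1) (by omega) (by omega) q hq1 hq2
  have hb2 := hδ (q - 1) (by omega) (by omega) q hq1 hq2
  have hb3 := hδ q (by omega) (by omega) q hq1 hq2
  -- logb values
  have hl0 := hlog t (by omega)
  have hlm := hlog (t - 1) (by omega)
  have hlp := hlog (t + 1) (by omega)
  have e1 : m + (t - 1) = q - 1 := by omega
  have e2 : m + (t + 1) = q + 1 := by omega
  rw [e1] at hlm
  rw [e2] at hlp
  -- product error bounds
  have key : ∀ s : ℕ, ∀ x : ℝ, -( |x| * δ) ≤ x * ε s ∧ x * ε s ≤ |x| * δ := by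
    intro s x
    have h1 : |x * ε s| ≤ |x| * δ := by
      rw [abs_mul]
      exact mul_le_mul_of_nonneg_left (hε s) (abs_nonneg x)
    constructor
    · nlinarith [neg_abs_le (x * ε s)]
    · nlinarith [le_abs_self (x * ε s)]
  obtain ⟨k1, -⟩ := key (t + 1) (f (q + 1))
  obtain ⟨k2, -⟩ := key (t - 1) (f (q - 1))
  obtain ⟨-, k3⟩ := key t (f q)
  have hE : 0 < Δ + (f (q + 1) * ε (t + 1) + f (q - 1) * ε (t - 1) - 2 * (f q * ε t)) := by
    nlinarith
  have hlt : Real.logb 2 (a t ^ 2) < Real.logb 2 (a (t - 1) * a (t + 1)) := by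
    rw [Real.logb_pow, Real.logb_mul (hapos (t - 1)).ne' (hapos (t + 1)).ne',
      hl0, hlm, hlp]
    push_cast
    nlinarith [mul_pos hD hE]
  exact (Real.logb_lt_logb_iff (by norm_num : (1:ℝ) < 2)
    (pow_pos (hapos t) 2) (mul_pos (hapos (t - 1)) (hapos (t + 1)))).mp hlt
end
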